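/- Fix an integer m ≥ 1 and a real b ≠ 0. Let I ⊆ ℝ be a nonempty open interval with 0 ∉ I, and let φ : I → ℝ be twice differentiable and satisfy τ⁴φ″(τ) + [(2−m)τ³ + bτ²]φ′(τ) − mτ²φ(τ) = 0 at every τ ∈ I. Then there exist real constants β₁, β₂ such that φ(τ) = β₁·τ^m·exp(b/τ) + β₂·Σ_{l=0}^{m} (b^{m−l}/(m−l)!)·τ^l for all τ ∈ I. -/

import Mathlib

/-!
The operator is `τ²` times the derivative of `τ²φ' + (b - mτ)φ`, so this first integral is a
constant `c` on `I`. The polynomial `p(τ) = Σ b^(m-l)/(m-l)! τ^l` satisfies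
`τ²p' + (b - mτ)p = b^(m+1)/m!`, so subtracting a multiple of `p` leaves a solution of the
homogeneous first-order equation `τ²ψ' = (mτ - b)ψ`, whose solutions are the multiples of the
integrating factor `τ^m exp(b/τ)`.
-/

open Finset

theorem IsOpen.exists_eq_const_mul_of_hasDerivAt_eq_mul {𝕜 : Type*} [RCLike 𝕜] {s : Set 𝕜}
    (hs : IsOpen s) (hs' : IsPreconnected s) {a y E : 𝕜 → 𝕜}
    (hE : ∀ x ∈ s, HasDerivAt E (a x * E x) x) (hE₀ : ∀ x ∈ s, E x ≠ 0)
    (hy : ∀ x ∈ s, HasDerivAt y (a x * y x) x) :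
    ∃ C, ∀ x ∈ s, y x = C * E x := by
  have hquot : ∀ x ∈ s, HasDerivAt (fun x => y x / E x) 0 x := fun x hx => by
    refine ((hy x hx).fun_div (hE x hx) (hE₀ x hx)).congr_deriv ?_
    ring
  obtain ⟨C, hC⟩ := hs.exists_is_const_of_deriv_eq_zero hs'
    (fun x hx => (hquot x hx).differentiableAt.differentiableWithinAt)
    (fun x hx => (hquot x hx).deriv)
  exact ⟨C, fun x hx => by rw [← hC x hx, div_mul_cancel₀ _ (hE₀ x hx)]⟩

theorem hasDerivAt_pow_mul_exp_div (m : ℕ) (b : ℝ) {τ : ℝ} (hτ : τ ≠ 0) :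
    HasDerivAt (fun t => t ^ m * Real.exp (b / t))
      ((m * τ - b) / τ ^ 2 * (τ ^ m * Real.exp (b / τ))) τ := by
  have hexp : HasDerivAt (fun t => Real.exp (b / t)) (Real.exp (b / τ) * (-b / τ ^ 2)) τ := by
    simpa [div_eq_mul_inv] using ((hasDerivAt_inv hτ).const_mul b).exp
  refine ((hasDerivAt_pow m τ).fun_mul hexp).congr_deriv ?_
  rcases m with _ | m
  · field_simp; ring
  · field_simp; push_cast; ring

/-- `τ ^ m` times the degree-`m` Taylor polynomial of `exp` at `b / τ`. -/
noncomputable def truncExpPoly (m : ℕ) (b τ : ℝ) : ℝ :=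
  ∑ l ∈ range (m + 1), b ^ (m - l) / ((m - l).factorial : ℝ) * τ ^ l

theorem truncExpPoly_zero (b : ℝ) : truncExpPoly 0 b = 1 := by
  ext; simp [truncExpPoly]

theorem truncExpPoly_succ (m : ℕ) (b : ℝ) :
    truncExpPoly (m + 1) b =
      fun τ => τ * truncExpPoly m b τ + b ^ (m + 1) / (m + 1).factorial := by
  ext τ
  rw [truncExpPoly, sum_range_succ', truncExpPoly, mul_sum]
  simp only [Nat.add_sub_add_right, Nat.sub_zero, pow_zero, mul_one, pow_succ]
  congr 1
  exact sum_congr rfl fun l _ => by ring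

theorem differentiable_truncExpPoly (m : ℕ) (b : ℝ) : Differentiable ℝ (truncExpPoly m b) := by
  unfold truncExpPoly
  fun_prop

theorem sq_mul_deriv_truncExpPoly_add (m : ℕ) (b τ : ℝ) :
    τ ^ 2 * deriv (truncExpPoly m b) τ + (b - m * τ) * truncExpPoly m b τ
      = b ^ (m + 1) / m.factorial := by
  induction m with
  | zero => simp [truncExpPoly_zero]
  | succ m ih =>
    have hderiv : deriv (truncExpPoly (m + 1) b) τ
        = truncExpPoly m b τ + τ * deriv (truncExpPoly m b) τ := by
      rw [truncExpPoly_succ]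
      simpa using (((hasDerivAt_id' τ).fun_mul
        (differentiable_truncExpPoly m b τ).hasDerivAt).add_const
          (b ^ (m + 1) / ((m + 1).factorial : ℝ))).deriv
    rw [hderiv, truncExpPoly_succ, Nat.factorial_succ, eq_div_iff (by positivity)] at *
    push_cast
    field_simp
    linear_combination (m + 1) * τ * ih

theorem hasDerivAt_sq_mul_deriv_add_mul {φ : ℝ → ℝ} (k b : ℝ) {τ : ℝ}
    (hφ : DifferentiableAt ℝ φ τ) (hφ' : DifferentiableAt ℝ (deriv φ) τ) :
    HasDerivAt (fun t => t ^ 2 * deriv φ t + (b - k * t) * φ t)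
      (τ ^ 2 * deriv (deriv φ) τ + ((2 - k) * τ + b) * deriv φ τ - k * φ τ) τ := by
  have hlin : HasDerivAt (fun t => b - k * t) (-k) τ := by
    simpa using ((hasDerivAt_id τ).const_mul k).const_sub b
  refine (((hasDerivAt_pow 2 τ).fun_mul hφ'.hasDerivAt).add
    (hlin.fun_mul hφ.hasDerivAt)).congr_deriv ?_
  simp only [Nat.cast_ofNat]
  ring

theorem stmt_16_general (m : ℕ) (b : ℝ) (hb : b ≠ 0)
    (I : Set ℝ) (hIopen : IsOpen I) (hIconn : I.OrdConnected)
    (h0 : (0:ℝ) ∉ I)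
    (φ : ℝ → ℝ)
    (hφ : ∀ τ ∈ I, DifferentiableAt ℝ φ τ)
    (hφ' : ∀ τ ∈ I, DifferentiableAt ℝ (deriv φ) τ)
    (hode : ∀ τ ∈ I,
      τ^4 * deriv (deriv φ) τ + ((2-(m:ℝ))*τ^3 + b*τ^2) * deriv φ τ
        - (m:ℝ)*τ^2 * φ τ = 0) :
    ∃ β₁ β₂ : ℝ, ∀ τ ∈ I,
      φ τ = β₁ * (τ^m * Real.exp (b/τ))
        + β₂ * ∑ l ∈ Finset.range (m+1), b^(m-l) / ((m-l).factorial : ℝ) * τ^l := by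
  have hne : ∀ τ ∈ I, τ ≠ 0 := fun τ hτ h => h0 (h ▸ hτ)
  have hI := hIconn.isPreconnected
  have hfirst := fun τ hτ => hasDerivAt_sq_mul_deriv_add_mul m b (hφ τ hτ) (hφ' τ hτ)
  obtain ⟨c, hc⟩ := hIopen.exists_is_const_of_deriv_eq_zero hI
    (fun τ hτ => (hfirst τ hτ).differentiableAt.differentiableWithinAt) fun τ hτ => by
      rw [(hfirst τ hτ).deriv]
      refine (mul_eq_zero.mp ?_).resolve_left (pow_ne_zero 2 (hne τ hτ))
      linear_combination hode τ hτ
  obtain ⟨β₂, hβ₂⟩ : ∃ β₂ : ℝ, β₂ * (b ^ (m + 1) / m.factorial) = c :=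
    ⟨c * m.factorial / b ^ (m + 1), by field_simp⟩
  obtain ⟨β₁, hβ₁⟩ := hIopen.exists_eq_const_mul_of_hasDerivAt_eq_mul hI
    (y := fun τ => φ τ - β₂ * truncExpPoly m b τ)
    (fun τ hτ => hasDerivAt_pow_mul_exp_div m b (hne τ hτ))
    (fun τ hτ => mul_ne_zero (pow_ne_zero _ (hne τ hτ)) (Real.exp_ne_zero _)) fun τ hτ => by
      refine ((hφ τ hτ).hasDerivAt.sub
        ((differentiable_truncExpPoly m b τ).hasDerivAt.const_mul β₂)).congr_deriv ?_
      have hτ₀ := hne τ hτ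
      field_simp
      linear_combination hc τ hτ - β₂ * sq_mul_deriv_truncExpPoly_add m b τ - hβ₂
  unfold truncExpPoly at hβ₁
  exact ⟨β₁, β₂, fun τ hτ => by linear_combination hβ₁ τ hτ⟩

/-- Every solution of the homogeneous version of (F1) on a nonempty
open interval avoiding `0` is a linear combination of `τ^m·exp(b/τ)` and
`Σ_{l=0}^{m} (b^{m−l}/(m−l)!)·τ^l`. -/
theorem stmt_16 (m : ℕ) (hm : 1 ≤ m) (b : ℝ) (hb : b ≠ 0)
    (I : Set ℝ) (hIopen : IsOpen I) (hIne : I.Nonempty) (hIconn : I.OrdConnected)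
    (h0 : (0:ℝ) ∉ I)
    (φ : ℝ → ℝ)
    (hφ : ∀ τ ∈ I, DifferentiableAt ℝ φ τ)
    (hφ' : ∀ τ ∈ I, DifferentiableAt ℝ (deriv φ) τ)
    (hode : ∀ τ ∈ I,
      τ^4 * deriv (deriv φ) τ + ((2-(m:ℝ))*τ^3 + b*τ^2) * deriv φ τ
        - (m:ℝ)*τ^2 * φ τ = 0) :
    ∃ β₁ β₂ : ℝ, ∀ τ ∈ I,
      φ τ = β₁ * (τ^m * Real.exp (b/τ))
        + β₂ * ∑ l ∈ Finset.range (m+1), b^(m-l) / ((m-l).factorial : ℝ) * τ^l :=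
  stmt_16_general m b hb I hIopen hIconn h0 φ hφ hφ' hode
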